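/- arXiv:2201.01357 — 2 statements merged into one kernel-verified Lean document; each statement's English description precedes it below -/
import Mathlib

section
/- Let F_1,...,F_G be symmetric positive semi-definite p×p matrices and λ > 0. The function k(β) = exp(-λ Σ_{g=1}^G sqrt(β^T F_g β)) on R^p is integrable if and only if the intersection of the null spaces of F_1,...,F_G is {0} (equivalently, the vertically stacked matrix [F_1; ...; F_G] has full column rank). -/
/-!
Write `f β = Σ_g √(βᵀ F_g β)`; it is continuous and absolutely homogeneous. If the `F_g` have only
`0` as common null vector, `f` is positive on the unit sphere, hence `f β ≥ c ‖β‖` for some `c > 0`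
by compactness, and the integrand is dominated by the integrable `exp (-λ c ‖β‖)`. Otherwise `f`,
and with it the integrand, is invariant under translation by a common null vector `v ≠ 0`; the
integrand is then bounded below by a positive constant on the disjoint balls `B(n v, r)`, `n ∈ ℤ`,
and its integral is infinite.
-/

open MeasureTheory Matrix Metric Set

theorem exists_pos_mul_norm_le_of_abs_homogeneous {E : Type*} [NormedAddCommGroup E]
    [NormedSpace ℝ E] [FiniteDimensional ℝ E] {f : E → ℝ} (hf : Continuous f)
    (hsmul : ∀ (c : ℝ) x, f (c • x) = |c| * f x) (hpos : ∀ x, x ≠ 0 → 0 < f x) :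
    ∃ c > 0, ∀ x, c * ‖x‖ ≤ f x := by
  have hf0 : f 0 = 0 := by simpa using hsmul 0 0
  rcases subsingleton_or_nontrivial E with hE | hE
  · exact ⟨1, one_pos, fun x => by simp [Subsingleton.elim x 0, hf0]⟩
  obtain ⟨x₀, hx₀, hmin⟩ := (isCompact_sphere (0 : E) 1).exists_isMinOn
    (NormedSpace.sphere_nonempty.mpr zero_le_one) hf.continuousOn
  refine ⟨f x₀, hpos x₀ (ne_zero_of_mem_unit_sphere ⟨x₀, hx₀⟩), fun x => ?_⟩
  rcases eq_or_ne x 0 with rfl | hx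
  · simp [hf0]
  have hx' : 0 < ‖x‖ := norm_pos_iff.mpr hx
  have hmin_x : f x₀ ≤ ‖x‖⁻¹ * f x := by
    rw [← abs_of_pos (inv_pos.mpr hx'), ← hsmul]
    exact hmin (by simp [norm_smul, hx'.ne'])
  calc f x₀ * ‖x‖ ≤ ‖x‖⁻¹ * f x * ‖x‖ := by gcongr
    _ = f x := by field_simp

section AddHaar

variable {E : Type*} [NormedAddCommGroup E] [NormedSpace ℝ E] [MeasurableSpace E] [BorelSpace E]
  (μ : Measure E) [μ.IsAddHaarMeasure]

theorem not_integrable_of_periodic {g : E → ℝ} (hg : Continuous g) (hg0 : g 0 ≠ 0) {v : E}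
    (hv : v ≠ 0) (hper : Function.Periodic g v) : ¬ Integrable g μ := by
  intro hint
  set ε := ‖g 0‖ / 2
  have hε : 0 < ε := by positivity
  obtain ⟨δ, hδ, hball⟩ := Metric.eventually_nhds_iff_ball.mp
    ((hg.norm.tendsto 0).eventually (lt_mem_nhds (half_lt_self (norm_pos_iff.mpr hg0))))
  set r := min δ (‖v‖ / 2)
  have hr : 0 < r := lt_min hδ (by positivity)
  set B : ℤ → Set E := fun n => ball (n • v) r
  have hdisj : Pairwise (Function.onFun Disjoint B) := by
    intro m n hmn
    refine ball_disjoint_ball ?_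
    have h1 : (1 : ℝ) ≤ |((m - n : ℤ) : ℝ)| := by
      exact_mod_cast Int.one_le_abs (sub_ne_zero.mpr hmn)
    calc r + r ≤ ‖v‖ := by linarith [min_le_right δ (‖v‖ / 2)]
      _ ≤ |((m - n : ℤ) : ℝ)| * ‖v‖ := le_mul_of_one_le_left (norm_nonneg v) h1
      _ = dist (m • v) (n • v) := by
        rw [dist_eq_norm, ← sub_smul, norm_zsmul ℝ, Real.norm_eq_abs]
  have hlower : ∀ n : ℤ, ENNReal.ofReal ε * μ (ball 0 r) ≤ ∫⁻ x in B n, ‖g x‖ₑ ∂μ := by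
    intro n
    rw [← Measure.addHaar_ball_center μ (n • v), ← setLIntegral_const]
    refine setLIntegral_mono' measurableSet_ball fun x hx => ?_
    have hx' : x - n • v ∈ ball (0 : E) δ := by
      rw [mem_ball_zero_iff, ← dist_eq_norm]
      exact lt_of_lt_of_le hx (min_le_left _ _)
    rw [← ofReal_norm, ← hper.sub_zsmul_eq n]
    exact ENNReal.ofReal_le_ofReal (hball _ hx').le
  have htop : ∑' _ : ℤ, ENNReal.ofReal ε * μ (ball 0 r) = ⊤ :=
    ENNReal.tsum_const_eq_top_of_ne_zero
      (mul_ne_zero (by simpa using hε) (measure_ball_pos μ 0 hr).ne')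
  refine hint.2.ne (top_le_iff.mp ?_)
  calc ⊤ = ∑' n : ℤ, ENNReal.ofReal ε * μ (ball 0 r) := htop.symm
    _ ≤ ∑' n, ∫⁻ x in B n, ‖g x‖ₑ ∂μ := ENNReal.tsum_le_tsum hlower
    _ = ∫⁻ x in ⋃ n, B n, ‖g x‖ₑ ∂μ :=
      (lintegral_iUnion (fun _ => measurableSet_ball) hdisj _).symm
    _ ≤ ∫⁻ x, ‖g x‖ₑ ∂μ := setLIntegral_le_lintegral _ _

theorem integrable_exp_neg_mul_norm [FiniteDimensional ℝ E] {a : ℝ} (ha : 0 < a) :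
    Integrable (fun x => Real.exp (-a * ‖x‖)) μ := by
  rcases subsingleton_or_nontrivial E with hE | hE
  · exact .of_finite
  rw [integrable_fun_norm_addHaar μ (f := fun y => Real.exp (-a * y))]
  refine (integrableOn_rpow_mul_exp_neg_mul_rpow (s := (Module.finrank ℝ E - 1 : ℕ))
    (neg_one_lt_zero.trans_le (Nat.cast_nonneg _)) one_pos ha).congr_fun (fun y _ => ?_)
    measurableSet_Ioi
  simp [Real.rpow_natCast]

end AddHaar

namespace Matrix

variable {n ι : Type*} [Fintype n] [Fintype ι]

noncomputable def sumSqrtQuadForm (F : ι → Matrix n n ℝ) (β : n → ℝ) : ℝ :=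
  ∑ g, √(β ⬝ᵥ F g *ᵥ β)

variable (F : ι → Matrix n n ℝ)

theorem continuous_sumSqrtQuadForm : Continuous (sumSqrtQuadForm F) := by
  unfold sumSqrtQuadForm
  fun_prop

theorem sumSqrtQuadForm_smul (c : ℝ) (β : n → ℝ) :
    sumSqrtQuadForm F (c • β) = |c| * sumSqrtQuadForm F β := by
  simp only [sumSqrtQuadForm, Finset.mul_sum, mulVec_smul, smul_dotProduct, dotProduct_smul,
    smul_eq_mul, ← mul_assoc, ← sq, Real.sqrt_mul (sq_nonneg c), Real.sqrt_sq_eq_abs]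

theorem sumSqrtQuadForm_eq_zero_iff (hF : ∀ g, (F g).PosSemidef) {β : n → ℝ} :
    sumSqrtQuadForm F β = 0 ↔ ∀ g, F g *ᵥ β = 0 := by
  rw [sumSqrtQuadForm, Finset.sum_eq_zero_iff_of_nonneg fun _ _ => Real.sqrt_nonneg _]
  refine forall_congr' fun g => ?_
  have hq : 0 ≤ β ⬝ᵥ F g *ᵥ β := by simpa using (hF g).dotProduct_mulVec_nonneg β
  rw [← (hF g).dotProduct_mulVec_zero_iff, star_trivial, Real.sqrt_eq_zero hq]
  simp

theorem sumSqrtQuadForm_pos (hF : ∀ g, (F g).PosSemidef)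
    (hker : ∀ β, (∀ g, F g *ᵥ β = 0) → β = 0) {β : n → ℝ} (hβ : β ≠ 0) :
    0 < sumSqrtQuadForm F β :=
  (Finset.sum_nonneg fun _ _ => Real.sqrt_nonneg _).lt_of_ne
    fun h => hβ (hker β ((sumSqrtQuadForm_eq_zero_iff F hF).mp h.symm))

theorem periodic_sumSqrtQuadForm (hF : ∀ g, (F g).IsHermitian) {v : n → ℝ}
    (hv : ∀ g, F g *ᵥ v = 0) : Function.Periodic (sumSqrtQuadForm F) v := by
  intro x
  have hcross : ∀ g, v ⬝ᵥ F g *ᵥ x = 0 := fun g => by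
    rw [dotProduct_mulVec, ← mulVec_transpose, ← conjTranspose_eq_transpose_of_trivial,
      (hF g).eq, hv, zero_dotProduct]
  simp only [sumSqrtQuadForm, mulVec_add, hv, add_zero, add_dotProduct, hcross]

end Matrix

/-- The structured-sparse kernel `exp(-λ Σ_g √(βᵀ F_g β))` is integrable on `ℝ^p`
iff the intersection of the null spaces of the PSD matrices `F_g` is trivial
(equivalently, the stacked matrix `[F_1; …; F_G]` has full column rank). -/
theorem stmt0 (p G : ℕ) (F : Fin G → Matrix (Fin p) (Fin p) ℝ)
    (hF : ∀ g, (F g).PosSemidef) (lam : ℝ) (hlam : 0 < lam) :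
    Integrable
        (fun β : Fin p → ℝ =>
          Real.exp (-lam * ∑ g, Real.sqrt (β ⬝ᵥ (F g).mulVec β)))
        volume
      ↔ (∀ β : Fin p → ℝ, (∀ g, (F g).mulVec β = 0) → β = 0) := by
  change Integrable (fun β => Real.exp (-lam * sumSqrtQuadForm F β)) volume ↔ _
  have hcont : Continuous fun β => Real.exp (-lam * sumSqrtQuadForm F β) := by
    have := continuous_sumSqrtQuadForm F
    fun_prop
  constructor
  · intro hint v hv
    by_contra hv0
    have hper := periodic_sumSqrtQuadForm F (fun g => (hF g).isHermitian) hv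
    exact not_integrable_of_periodic volume hcont (Real.exp_pos _).ne' hv0
      (hper.comp fun t => Real.exp (-lam * t)) hint
  · intro hker
    obtain ⟨c, hc, hle⟩ := exists_pos_mul_norm_le_of_abs_homogeneous
      (continuous_sumSqrtQuadForm F) (sumSqrtQuadForm_smul F)
      fun β => sumSqrtQuadForm_pos F hF hker
    refine (integrable_exp_neg_mul_norm volume (mul_pos hlam hc)).mono'
      hcont.aestronglyMeasurable (ae_of_all _ fun β => ?_)
    rw [Real.norm_of_nonneg (Real.exp_pos _).le, Real.exp_le_exp]
    nlinarith [hle β]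
end

section
/- For any b in R, the identity (e^ψ)^y / (1 + e^ψ) = (1/2) e^{(y - 1/2)ψ} ∫_0^∞ e^{-ω ψ²/2} f_{PG}(ω | 1, 0) dω holds for y in {0,1}, where f_{PG}(· | 1, 0) is the Polya-Gamma(1,0) density; equivalently, 1/(1+e^ψ) · e^{yψ} equals (1/2) e^{(y-1/2)ψ} E_{ω ~ PG(1,0)}[e^{-ω ψ²/2}]. -/
open MeasureTheory Real

/- Since `1 + e^ψ = 2 e^{ψ/2} cosh(ψ/2)`, the logistic likelihood `e^{yψ} / (1 + e^ψ)` equals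
`(1/2) e^{(y - 1/2)ψ} / cosh(ψ/2)` for every real `y`, and the Laplace-type transform of PG(1,0)
turns `1 / cosh(ψ/2)` into the integral. -/

theorem one_add_exp_eq_two_mul_exp_half_mul_cosh_half (ψ : ℝ) :
    1 + exp ψ = 2 * exp (ψ / 2) * cosh (ψ / 2) := by
  have hsq : exp (ψ / 2) * exp (ψ / 2) = exp ψ := by rw [← exp_add, add_halves]
  have hinv : exp (ψ / 2) * exp (-(ψ / 2)) = 1 := by rw [← exp_add, add_neg_cancel, exp_zero]
  rw [cosh_eq]
  linear_combination -hsq - hinv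

theorem exp_rpow_div_one_add_exp (y ψ : ℝ) :
    exp ψ ^ y / (1 + exp ψ) = 1 / 2 * exp ((y - 1 / 2) * ψ) * (cosh (ψ / 2))⁻¹ := by
  have hshift : exp (y * ψ) = exp ((y - 1 / 2) * ψ) * exp (ψ / 2) := by
    rw [← exp_add]; ring_nf
  rw [← exp_mul, mul_comm ψ, hshift, one_add_exp_eq_two_mul_exp_half_mul_cosh_half]
  have := exp_pos (ψ / 2)
  have := cosh_pos (ψ / 2)
  field_simp

theorem stmt11_general (ν : Measure ℝ)
    (hlap : ∀ t : ℝ, (∫ ω, Real.exp (-(ω * t ^ 2) / 2) ∂ν) = (Real.cosh (t / 2))⁻¹)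
    (y : ℝ) (ψ : ℝ) :
    Real.exp ψ ^ y / (1 + Real.exp ψ)
      = (1 / 2) * Real.exp ((y - 1 / 2) * ψ)
          * ∫ ω, Real.exp (-(ω * ψ ^ 2) / 2) ∂ν := by
  rw [hlap, exp_rpow_div_one_add_exp]

/-- Polya-Gamma data-augmentation identity: if `ν` is the PG(1,0) distribution,
characterized by its Laplace-type transform `∫ e^{-ω t²/2} dν(ω) = cosh(t/2)⁻¹`,
then for `y ∈ {0,1}` and any `ψ`,
`(e^ψ)^y / (1 + e^ψ) = (1/2) e^{(y - 1/2)ψ} ∫ e^{-ω ψ²/2} dν(ω)`. -/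
theorem stmt11 (ν : Measure ℝ) [IsProbabilityMeasure ν]
    (hlap : ∀ t : ℝ, (∫ ω, Real.exp (-(ω * t ^ 2) / 2) ∂ν) = (Real.cosh (t / 2))⁻¹)
    (y : ℝ) (hy : y = 0 ∨ y = 1) (ψ : ℝ) :
    Real.exp ψ ^ y / (1 + Real.exp ψ)
      = (1 / 2) * Real.exp ((y - 1 / 2) * ψ)
          * ∫ ω, Real.exp (-(ω * ψ ^ 2) / 2) ∂ν :=
  stmt11_general ν hlap y ψ
end
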